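/- Let A be a skew-symmetric matrix indexed by an ordered finite set γ = (v₁,...,vₙ), and let α, β be subsets with α ∪ β = γ. Write M = (α \ β) ∪ (β \ α) = {v_{i₁},...,v_{i_t}} (listed in increasing order). Then ∑_{τ=1}^{t} (−1)^τ · Pf(α △ {v_{i_τ}}) · Pf(β △ {v_{i_τ}}) = 0, where Pf(S) denotes the Pfaffian of the submatrix of A indexed by S (with the inherited order), and △ denotes symmetric difference. -/

import Mathlib

open Finset

open scoped Classical in
/-- An (ordered) matching on `Fin n`: a set of arcs `(i,j)` with `i < j`,
pairwise vertex-disjoint. -/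
def IsMatching {n : ℕ} (μ : Finset (Fin n × Fin n)) : Prop :=
  (∀ p ∈ μ, p.1 < p.2) ∧
    ∀ p ∈ μ, ∀ q ∈ μ, p ≠ q → ({p.1, p.2} ∩ {q.1, q.2} : Finset (Fin n)) = ∅

/-- The set of vertices covered by a matching. -/
def cover {n : ℕ} (μ : Finset (Fin n × Fin n)) : Finset (Fin n) :=
  μ.biUnion fun p => {p.1, p.2}

/-- The number of crossings of a matching: pairs of arcs `{a,c}`, `{b,d}` with
`a < b < c < d`. -/
def crossings {n : ℕ} (μ : Finset (Fin n × Fin n)) : ℕ :=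
  ((μ ×ˢ μ).filter fun pq => pq.1.1 < pq.2.1 ∧ pq.2.1 < pq.1.2 ∧ pq.1.2 < pq.2.2).card

open scoped Classical in
/-- The Pfaffian of the principal submatrix of a skew-symmetric matrix `A`
indexed by the subset `S` (with the inherited order), defined as the signed sum
over perfect matchings of `S`.  `mpf A ∅ = 1` and `mpf A S = 0` for `|S|` odd. -/
noncomputable def mpf {n : ℕ} {R : Type*} [CommRing R]
    (A : Matrix (Fin n) (Fin n) R) (S : Finset (Fin n)) : R :=
  ∑ μ ∈ Finset.univ.filter
      (fun μ : Finset (Fin n × Fin n) => IsMatching μ ∧ cover μ = S),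
    (-1 : R) ^ crossings μ * ∏ p ∈ μ, A p.1 p.2

/-- Symmetric difference of finite sets. -/
def sd {n : ℕ} (X Y : Finset (Fin n)) : Finset (Fin n) := (X ∪ Y) \ (X ∩ Y)

/-- `posSum M Y = Σ(Y,M)`: the sum over `y ∈ Y` of the (1-based) position of `y`
in the increasing enumeration of `M`. -/
def posSum {n : ℕ} (M Y : Finset (Fin n)) : ℕ :=
  ∑ y ∈ Y, (M.filter fun z => z ≤ y).card

/-!
Write `c_T` for the vector `j ↦ (-1) ^ #{x ∈ T | x < j} * Pf(T \ {j})`, zero off `T`.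
Sorting the perfect matchings of `T ∪ {v}` by the partner of `v` expands the Pfaffian along
the row `v`: `(A c_T)_v = ± Pf(T ∪ {v})` for `v ∉ T`. For `v ∈ T` the same expansion applied to
each `Pf(T \ {j})` turns `(A c_T)_v - A_vv c_T(v)` into an antisymmetric double sum, which
vanishes. Hence the `v`-th summand of the identity is `-(c_α(v) (A c_β)_v + c_β(v) (A c_α)_v)`,
an expression that also vanishes for `v ∉ α △ β`, and summing it over all `v` gives
`-(c_α ⬝ᵥ A c_β + c_β ⬝ᵥ A c_α) = 0` by skew-symmetry.
-/

open Matrix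

lemma neg_one_pow_eq_of_mod_two_eq {R : Type*} [Monoid R] [HasDistribNeg R] {m k : ℕ}
    (h : m % 2 = k % 2) : (-1 : R) ^ m = (-1) ^ k :=
  neg_one_pow_congr (by rw [Nat.even_iff, Nat.even_iff, h])

lemma sum_sum_erase_eq_zero_of_antisymm {ι M : Type*} [DecidableEq ι] [AddCommGroup M]
    (S : Finset ι) (F : ι → ι → M) (hF : ∀ j ∈ S, ∀ k ∈ S, j ≠ k → F j k = -F k j) :
    ∑ j ∈ S, ∑ k ∈ S.erase j, F j k = 0 := by
  rw [sum_sigma']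
  refine sum_involution (fun x _ => ⟨x.2, x.1⟩) ?_ ?_ ?_ fun _ _ => rfl
  · rintro ⟨j, k⟩ hx
    obtain ⟨hj, hkj, hk⟩ := mem_sigma.1 hx |>.imp_right mem_erase.1
    rw [hF j hj k hk hkj.symm, neg_add_cancel]
  · rintro ⟨j, k⟩ hx - h
    exact (mem_erase.1 (mem_sigma.1 hx).2).1 (congrArg Sigma.fst h)
  · rintro ⟨j, k⟩ hx
    obtain ⟨hj, hkj, hk⟩ := mem_sigma.1 hx |>.imp_right mem_erase.1
    exact mem_sigma.2 ⟨hk, mem_erase.2 ⟨hkj.symm, hj⟩⟩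

lemma dotProduct_mulVec_add_dotProduct_mulVec_eq_zero {ι R : Type*} [Fintype ι] [CommRing R]
    {A : Matrix ι ι R} (hA : Aᵀ = -A) (x y : ι → R) : x ⬝ᵥ A *ᵥ y + y ⬝ᵥ A *ᵥ x = 0 := by
  rw [dotProduct_mulVec y, ← mulVec_transpose, hA, neg_mulVec,
    neg_dotProduct, dotProduct_comm, add_neg_cancel]

section

variable {n : ℕ}

lemma mem_cover {μ : Finset (Fin n × Fin n)} {x : Fin n} :
    x ∈ cover μ ↔ ∃ p ∈ μ, x ∈ ({p.1, p.2} : Finset (Fin n)) := by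
  simp only [cover, mem_biUnion]

namespace IsMatching

variable {μ ν : Finset (Fin n × Fin n)} {p q : Fin n × Fin n}

lemma mono (h : IsMatching μ) (hνμ : ν ⊆ μ) : IsMatching ν :=
  ⟨fun p hp => h.1 p (hνμ hp), fun p hp q hq => h.2 p (hνμ hp) q (hνμ hq)⟩

lemma disjoint_ends (h : IsMatching μ) (hp : p ∈ μ) (hq : q ∈ μ) (hpq : p ≠ q) :
    Disjoint ({p.1, p.2} : Finset (Fin n)) {q.1, q.2} :=
  disjoint_iff_inter_eq_empty.2 (h.2 p hp q hq hpq)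

lemma eq_of_mem_ends (h : IsMatching μ) (hp : p ∈ μ) (hq : q ∈ μ) {x : Fin n}
    (hxp : x ∈ ({p.1, p.2} : Finset (Fin n))) (hxq : x ∈ ({q.1, q.2} : Finset (Fin n))) :
    p = q := by
  by_contra hpq
  exact disjoint_left.1 (h.disjoint_ends hp hq hpq) hxp hxq

lemma insert (h : IsMatching μ) (hp : p.1 < p.2) (h1 : p.1 ∉ cover μ) (h2 : p.2 ∉ cover μ) :
    IsMatching (insert p μ) := by
  have hfree : ∀ q ∈ μ, Disjoint ({p.1, p.2} : Finset (Fin n)) {q.1, q.2} := fun q hq =>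
    disjoint_left.2 fun x hxp hxq => by
      rcases mem_insert.1 hxp with rfl | hx
      · exact h1 (mem_cover.2 ⟨q, hq, hxq⟩)
      · exact h2 (mem_cover.2 ⟨q, hq, mem_singleton.1 hx ▸ hxq⟩)
  refine ⟨fun q hq => ?_, fun q hq r hr hqr => ?_⟩
  · rcases mem_insert.1 hq with rfl | hq
    exacts [hp, h.1 q hq]
  · rw [← disjoint_iff_inter_eq_empty]
    rcases mem_insert.1 hq with rfl | hqμ <;> rcases mem_insert.1 hr with rfl | hrμ
    exacts [absurd rfl hqr, hfree r hrμ, (hfree q hqμ).symm, h.disjoint_ends hqμ hrμ hqr]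

end IsMatching

lemma cover_insert (p : Fin n × Fin n) (μ : Finset (Fin n × Fin n)) :
    cover (insert p μ) = {p.1, p.2} ∪ cover μ :=
  biUnion_insert

lemma cover_erase {μ : Finset (Fin n × Fin n)} {p : Fin n × Fin n} (h : IsMatching μ)
    (hp : p ∈ μ) : cover (μ.erase p) = cover μ \ {p.1, p.2} := by
  ext x
  simp only [mem_sdiff, mem_cover, mem_erase]
  constructor
  · rintro ⟨q, ⟨hqp, hq⟩, hxq⟩
    exact ⟨⟨q, hq, hxq⟩, fun hxp => hqp (h.eq_of_mem_ends hq hp hxq hxp)⟩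
  · rintro ⟨⟨q, hq, hxq⟩, hxp⟩
    exact ⟨q, ⟨fun hqp => hxp (hqp ▸ hxq), hq⟩, hxq⟩

lemma notMem_of_notMem_cover {μ : Finset (Fin n × Fin n)} {p : Fin n × Fin n}
    (h : p.1 ∉ cover μ) : p ∉ μ :=
  fun hp => h (mem_cover.2 ⟨p, hp, mem_insert_self _ _⟩)

def arc (v j : Fin n) : Fin n × Fin n := (min v j, max v j)

lemma arc_comm (v j : Fin n) : arc v j = arc j v := by
  simp only [arc, min_comm, max_comm]

lemma arc_of_lt {p : Fin n × Fin n} (h : p.1 < p.2) : arc p.1 p.2 = p := by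
  simp only [arc, min_eq_left h.le, max_eq_right h.le]

lemma ends_arc (v j : Fin n) : ({(arc v j).1, (arc v j).2} : Finset (Fin n)) = {v, j} := by
  rcases le_total v j with h | h
  · simp only [arc, min_eq_left h, max_eq_right h]
  · simp only [arc, min_eq_right h, max_eq_left h, pair_comm]

lemma arc_fst_lt_snd {v j : Fin n} (h : v ≠ j) : (arc v j).1 < (arc v j).2 :=
  min_lt_max.2 h

def crossCount (p q : Fin n × Fin n) : ℕ :=
  if p.1 < q.1 ∧ q.1 < p.2 ∧ p.2 < q.2 then 1 else 0

lemma crossings_eq_sum (μ : Finset (Fin n × Fin n)) :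
    crossings μ = ∑ p ∈ μ, ∑ q ∈ μ, crossCount p q := by
  rw [crossings, card_filter, sum_product]
  rfl

lemma crossings_insert {μ : Finset (Fin n × Fin n)} {p : Fin n × Fin n} (hp : p ∉ μ) :
    crossings (insert p μ) = crossings μ + ∑ q ∈ μ, (crossCount p q + crossCount q p) := by
  have hpp : crossCount p p = 0 := if_neg fun h => lt_irrefl _ h.1
  simp only [crossings_eq_sum, sum_insert hp, hpp, sum_add_distrib]
  ring

/- An arc disjoint from `p` crosses it exactly when one of its ends lies strictly between
those of `p`. -/
lemma crossCount_add_crossCount_mod_two {p q : Fin n × Fin n} (hq : q.1 < q.2)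
    (h1 : p.1 ∉ ({q.1, q.2} : Finset (Fin n))) (h2 : p.2 ∉ ({q.1, q.2} : Finset (Fin n))) :
    (crossCount p q + crossCount q p) % 2
      = #(({q.1, q.2} : Finset (Fin n)).filter fun x => p.1 < x ∧ x < p.2) % 2 := by
  rw [card_filter, sum_pair hq.ne]
  simp only [crossCount, mem_insert, mem_singleton, not_or, Fin.lt_def, ← Fin.val_ne_iff] at *
  split_ifs <;> omega

lemma sum_crossCount_mod_two {μ : Finset (Fin n × Fin n)} {p : Fin n × Fin n}
    (h : IsMatching μ) (h1 : p.1 ∉ cover μ) (h2 : p.2 ∉ cover μ) :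
    (∑ q ∈ μ, (crossCount p q + crossCount q p)) % 2
      = #((cover μ).filter fun x => p.1 < x ∧ x < p.2) % 2 := by
  rw [cover, filter_biUnion, card_biUnion, sum_nat_mod, sum_nat_mod μ 2 (fun q => #_)]
  · refine congrArg (· % 2) (sum_congr rfl fun q hq => crossCount_add_crossCount_mod_two
      (h.1 q hq) (fun hp => h1 (mem_cover.2 ⟨q, hq, hp⟩))
      (fun hp => h2 (mem_cover.2 ⟨q, hq, hp⟩)))
  · exact fun q hq r hr hqr => disjoint_filter_filter (h.disjoint_ends hq hr hqr)

lemma neg_one_pow_crossings_insert {R : Type*} [Monoid R] [HasDistribNeg R]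
    {μ : Finset (Fin n × Fin n)} {p : Fin n × Fin n}
    (h : IsMatching μ) (h1 : p.1 ∉ cover μ) (h2 : p.2 ∉ cover μ) :
    (-1 : R) ^ crossings (insert p μ)
      = (-1) ^ crossings μ * (-1) ^ #((cover μ).filter fun x => p.1 < x ∧ x < p.2) := by
  rw [crossings_insert (notMem_of_notMem_cover h1), pow_add]
  exact congrArg _ (neg_one_pow_eq_of_mod_two_eq (sum_crossCount_mod_two h h1 h2))

def countLT (S : Finset (Fin n)) (v : Fin n) : ℕ := #(S.filter fun z => z < v)

lemma countLT_erase {S : Finset (Fin n)} {x : Fin n} (hx : x ∈ S) (y : Fin n) :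
    countLT S y = countLT (S.erase x) y + if x < y then 1 else 0 := by
  rw [countLT, countLT, card_filter, card_filter, ← sum_erase_add S _ hx]

lemma countLT_eq_add_card_between (S : Finset (Fin n)) {v j : Fin n} (hvj : v < j) :
    countLT S j
      = countLT S v + (if v ∈ S then 1 else 0) + #(S.filter fun x => v < x ∧ x < j) := by
  rw [countLT, countLT, card_filter, card_filter, card_filter, ← sum_ite_eq' S v fun _ => 1,
    ← sum_add_distrib, ← sum_add_distrib]
  refine sum_congr rfl fun x _ => ?_
  simp only [Fin.lt_def, Fin.ext_iff] at hvj ⊢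
  split_ifs <;> omega

lemma countLT_sd_mod_two (α β : Finset (Fin n)) (v : Fin n) :
    countLT (sd α β) v % 2 = (countLT α v + countLT β v) % 2 := by
  have hunion : countLT (α ∪ β) v + countLT (α ∩ β) v = countLT α v + countLT β v := by
    rw [countLT, countLT, filter_union, filter_inter_distrib]
    exact card_union_add_card_inter _ _
  have hsub : (α ∩ β).filter (· < v) ⊆ (α ∪ β).filter (· < v) :=
    filter_subset_filter _ inter_subset_union
  have hsd : countLT (sd α β) v = countLT (α ∪ β) v - countLT (α ∩ β) v := by
    rw [countLT, countLT, countLT, ← card_sdiff_of_subset hsub, sd]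
    congr 1
    ext x
    simp only [mem_filter, mem_sdiff]
    tauto
  have hle : countLT (α ∩ β) v ≤ countLT (α ∪ β) v := card_le_card hsub
  omega

lemma posSum_singleton {M : Finset (Fin n)} {v : Fin n} (hv : v ∈ M) :
    posSum M {v} = countLT M v + 1 := by
  have hlt : v ∉ M.filter fun z => z < v := fun h => lt_irrefl v (mem_filter.1 h).2
  rw [posSum, sum_singleton, countLT, ← card_insert_of_notMem hlt]
  congr 1
  ext x
  simp only [mem_filter, mem_insert, le_iff_lt_or_eq]
  constructor
  · rintro ⟨hx, hlt | rfl⟩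
    exacts [Or.inr ⟨hx, hlt⟩, Or.inl rfl]
  · rintro (rfl | ⟨hx, hlt⟩)
    exacts [⟨hv, Or.inr rfl⟩, ⟨hx, Or.inl hlt⟩]

lemma mem_sd {X Y : Finset (Fin n)} {x : Fin n} : x ∈ sd X Y ↔ (x ∈ X ↔ x ∉ Y) := by
  simp only [sd, mem_sdiff, mem_union, mem_inter]
  tauto

lemma sd_comm (X Y : Finset (Fin n)) : sd X Y = sd Y X := by
  rw [sd, sd, union_comm, inter_comm]

lemma sd_singleton_of_mem {X : Finset (Fin n)} {v : Fin n} (h : v ∈ X) :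
    sd X {v} = X.erase v := by
  ext x
  simp only [mem_sd, mem_singleton, mem_erase]
  by_cases hxv : x = v
  · subst hxv; tauto
  · tauto

lemma sd_singleton_of_notMem {X : Finset (Fin n)} {v : Fin n} (h : v ∉ X) :
    sd X {v} = insert v X := by
  ext x
  simp only [mem_sd, mem_singleton, mem_insert]
  by_cases hxv : x = v
  · subst hxv; tauto
  · tauto

lemma notMem_cover_of_mem_ends_arc {T : Finset (Fin n)} {v j x : Fin n}
    {μ : Finset (Fin n × Fin n)} (hv : v ∉ T) (hc : cover μ = T.erase j)
    (hx : x ∈ ({(arc v j).1, (arc v j).2} : Finset (Fin n))) : x ∉ cover μ := by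
  rw [ends_arc, mem_insert, mem_singleton] at hx
  rw [hc]
  rcases hx with rfl | rfl
  exacts [fun h => hv (mem_of_mem_erase h), notMem_erase x T]

open scoped Classical in
noncomputable def perfectMatchings (S : Finset (Fin n)) : Finset (Finset (Fin n × Fin n)) :=
  univ.filter fun μ => IsMatching μ ∧ cover μ = S

lemma mem_perfectMatchings {S : Finset (Fin n)} {μ : Finset (Fin n × Fin n)} :
    μ ∈ perfectMatchings S ↔ IsMatching μ ∧ cover μ = S := by
  simp only [perfectMatchings, mem_filter, mem_univ, true_and]

lemma insert_arc_mem_perfectMatchings {T : Finset (Fin n)} {v j : Fin n}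
    {μ : Finset (Fin n × Fin n)} (hv : v ∉ T) (hj : j ∈ T)
    (hμ : μ ∈ perfectMatchings (T.erase j)) :
    insert (arc v j) μ ∈ perfectMatchings (insert v T) := by
  obtain ⟨hm, hc⟩ := mem_perfectMatchings.1 hμ
  have hfree := fun x => notMem_cover_of_mem_ends_arc (x := x) hv hc
  refine mem_perfectMatchings.2 ⟨hm.insert (arc_fst_lt_snd fun h => hv (h ▸ hj))
    (hfree _ (mem_insert_self _ _)) (hfree _ (mem_insert_of_mem (mem_singleton_self _))), ?_⟩
  rw [cover_insert, ends_arc, hc, insert_union, singleton_union, insert_erase hj]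

lemma eq_of_insert_arc_eq_insert_arc {T : Finset (Fin n)} {v j₁ j₂ : Fin n}
    {μ₁ μ₂ : Finset (Fin n × Fin n)} (hv : v ∉ T) (hj₁ : j₁ ∈ T)
    (hc₁ : cover μ₁ = T.erase j₁) (hc₂ : cover μ₂ = T.erase j₂)
    (h : insert (arc v j₁) μ₁ = insert (arc v j₂) μ₂) : j₁ = j₂ ∧ μ₁ = μ₂ := by
  have hv_ends : ∀ j, v ∈ ({(arc v j).1, (arc v j).2} : Finset (Fin n)) := fun j => by
    rw [ends_arc]; exact mem_insert_self _ _
  have hnotMem₁ : arc v j₁ ∉ μ₁ := fun hmem =>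
    notMem_cover_of_mem_ends_arc hv hc₁ (hv_ends j₁) (mem_cover.2 ⟨_, hmem, hv_ends j₁⟩)
  have hnotMem₂ : arc v j₂ ∉ μ₂ := fun hmem =>
    notMem_cover_of_mem_ends_arc hv hc₂ (hv_ends j₂) (mem_cover.2 ⟨_, hmem, hv_ends j₂⟩)
  have harc : arc v j₁ = arc v j₂ := by
    rcases mem_insert.1 (h ▸ mem_insert_self (arc v j₁) μ₁) with h' | hmem
    · exact h'
    · exact absurd (mem_cover.2 ⟨_, hmem, hv_ends j₁⟩)
        (notMem_cover_of_mem_ends_arc hv hc₂ (hv_ends j₂))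
  have hj : j₁ = j₂ := by
    have hmem : j₁ ∈ ({v, j₂} : Finset (Fin n)) := by
      rw [← ends_arc, ← harc, ends_arc]; exact mem_insert_of_mem (mem_singleton_self _)
    rcases mem_insert.1 hmem with rfl | h'
    exacts [absurd hj₁ hv, mem_singleton.1 h']
  refine ⟨hj, ?_⟩
  rw [← erase_insert hnotMem₁, h, harc, erase_insert hnotMem₂]

lemma exists_insert_arc_eq {T : Finset (Fin n)} {v : Fin n} {μ : Finset (Fin n × Fin n)}
    (hv : v ∉ T) (hμ : μ ∈ perfectMatchings (insert v T)) :
    ∃ j ∈ T, ∃ μ' ∈ perfectMatchings (T.erase j), insert (arc v j) μ' = μ := by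
  obtain ⟨hm, hc⟩ := mem_perfectMatchings.1 hμ
  obtain ⟨p, hp, hvp⟩ := mem_cover.1 (hc ▸ mem_insert_self v T)
  obtain ⟨j, rfl⟩ : ∃ j, p = arc v j := by
    rcases mem_insert.1 hvp with rfl | h
    · exact ⟨p.2, (arc_of_lt (hm.1 p hp)).symm⟩
    · exact ⟨p.1, by rw [mem_singleton.1 h, arc_comm, arc_of_lt (hm.1 p hp)]⟩
  have hvj : v ≠ j := min_lt_max.1 (hm.1 _ hp)
  have hj : j ∈ T := by
    have hjμ : j ∈ cover μ :=
      mem_cover.2 ⟨_, hp, by rw [ends_arc]; exact mem_insert_of_mem (mem_singleton_self _)⟩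
    rw [hc, mem_insert] at hjμ
    exact hjμ.resolve_left hvj.symm
  refine ⟨j, hj, μ.erase (arc v j), mem_perfectMatchings.2 ⟨hm.mono (erase_subset _ _), ?_⟩,
    insert_erase hp⟩
  rw [cover_erase hm hp, ends_arc, hc]
  ext x
  simp only [mem_sdiff, mem_insert, mem_singleton, mem_erase, not_or]
  by_cases hxv : x = v
  · subst hxv; tauto
  · tauto

section Expansion

variable {R : Type*} [CommRing R]

def matchingWeight (A : Matrix (Fin n) (Fin n) R) (μ : Finset (Fin n × Fin n)) : R :=
  (-1) ^ crossings μ * ∏ p ∈ μ, A p.1 p.2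

lemma mpf_eq_sum_matchingWeight (A : Matrix (Fin n) (Fin n) R) (S : Finset (Fin n)) :
    mpf A S = ∑ μ ∈ perfectMatchings S, matchingWeight A μ :=
  rfl

lemma neg_one_pow_card_between_mul_arc {A : Matrix (Fin n) (Fin n) R}
    (hA : ∀ i j, A i j = -A j i) {T : Finset (Fin n)} {v j : Fin n} (hv : v ∉ T) (hj : j ∈ T) :
    (-1 : R) ^ #((T.erase j).filter fun x => (arc v j).1 < x ∧ x < (arc v j).2)
        * A (arc v j).1 (arc v j).2
      = (-1) ^ (countLT T v + countLT T j) * A v j := by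
  rcases (show v ≠ j from fun h => hv (h ▸ hj)).lt_or_gt with h | h
  · have hcount := countLT_eq_add_card_between T h
    rw [if_neg hv] at hcount
    simp only [arc, min_eq_left h.le, max_eq_right h.le, filter_erase, lt_irrefl, and_false,
      not_false_eq_true, erase_eq_of_notMem, mem_filter]
    congr 1
    exact neg_one_pow_eq_of_mod_two_eq (by omega)
  · have hcount := countLT_eq_add_card_between T h
    rw [if_pos hj] at hcount
    simp only [arc, min_eq_right h.le, max_eq_left h.le, filter_erase, lt_irrefl, false_and,
      and_false, not_false_eq_true, erase_eq_of_notMem, mem_filter]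
    rw [hA j v, mul_neg, ← neg_mul, ← neg_one_mul ((-1 : R) ^ _), ← pow_succ']
    congr 1
    exact neg_one_pow_eq_of_mod_two_eq (by omega)

lemma matchingWeight_insert_arc {A : Matrix (Fin n) (Fin n) R} (hA : ∀ i j, A i j = -A j i)
    {T : Finset (Fin n)} {v j : Fin n} {μ : Finset (Fin n × Fin n)} (hv : v ∉ T) (hj : j ∈ T)
    (hμ : μ ∈ perfectMatchings (T.erase j)) :
    matchingWeight A (insert (arc v j) μ)
      = (-1) ^ (countLT T v + countLT T j) * A v j * matchingWeight A μ := by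
  obtain ⟨hm, hc⟩ := mem_perfectMatchings.1 hμ
  have h1 := notMem_cover_of_mem_ends_arc hv hc (mem_insert_self _ _)
  have h2 := notMem_cover_of_mem_ends_arc hv hc (mem_insert_of_mem (mem_singleton_self _))
  rw [matchingWeight, matchingWeight, neg_one_pow_crossings_insert hm h1 h2,
    prod_insert (notMem_of_notMem_cover h1), hc, ← neg_one_pow_card_between_mul_arc hA hv hj]
  ring

theorem mpf_insert {A : Matrix (Fin n) (Fin n) R} (hA : ∀ i j, A i j = -A j i)
    {T : Finset (Fin n)} {v : Fin n} (hv : v ∉ T) :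
    mpf A (insert v T)
      = ∑ j ∈ T, (-1) ^ (countLT T v + countLT T j) * A v j * mpf A (T.erase j) := by
  simp only [mpf_eq_sum_matchingWeight, mul_sum]
  rw [sum_sigma']
  symm
  refine sum_bij (fun x _ => insert (arc v x.1) x.2) ?_ ?_ ?_ ?_
  · rintro ⟨j, μ⟩ hx
    obtain ⟨hj, hμ⟩ := mem_sigma.1 hx
    exact insert_arc_mem_perfectMatchings hv hj hμ
  · rintro ⟨j₁, μ₁⟩ hx₁ ⟨j₂, μ₂⟩ hx₂ h
    obtain ⟨hj₁, hμ₁⟩ := mem_sigma.1 hx₁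
    obtain ⟨-, hμ₂⟩ := mem_sigma.1 hx₂
    obtain ⟨rfl, rfl⟩ := eq_of_insert_arc_eq_insert_arc hv hj₁
      (mem_perfectMatchings.1 hμ₁).2 (mem_perfectMatchings.1 hμ₂).2 h
    rfl
  · intro μ hμ
    obtain ⟨j, hj, μ', hμ', rfl⟩ := exists_insert_arc_eq hv hμ
    exact ⟨⟨j, μ'⟩, mem_sigma.2 ⟨hj, hμ'⟩, rfl⟩
  · rintro ⟨j, μ⟩ hx
    obtain ⟨hj, hμ⟩ := mem_sigma.1 hx
    exact (matchingWeight_insert_arc hA hv hj hμ).symm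

end Expansion

/- The `(j, k)` and `(k, j)` terms of the double expansion in
`sum_erase_mul_mpf_erase_eq_zero` have opposite signs. -/
lemma countLT_double_expansion_mod_two {T : Finset (Fin n)} {v j k : Fin n} (hv : v ∈ T)
    (hj : j ∈ T.erase v) (hk : k ∈ T.erase v) (hjk : j ≠ k) :
    (countLT T j + countLT ((T.erase v).erase j) v + countLT ((T.erase v).erase j) k
      + (countLT T k + countLT ((T.erase v).erase k) v + countLT ((T.erase v).erase k) j))
      % 2 = 1 := by
  have := countLT_erase hv j
  have := countLT_erase hv k
  have := countLT_erase hj v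
  have := countLT_erase hk v
  have := countLT_erase hj k
  have := countLT_erase hk j
  have hjv := (mem_erase.1 hj).1
  have hkv := (mem_erase.1 hk).1
  simp only [Fin.lt_def, ← Fin.val_ne_iff] at *
  split_ifs at * <;> omega

section Cofactor

variable {R : Type*} [CommRing R]

lemma sum_erase_mul_mpf_erase_eq_zero {A : Matrix (Fin n) (Fin n) R}
    (hA : ∀ i j, A i j = -A j i) {T : Finset (Fin n)} {v : Fin n} (hv : v ∈ T) :
    ∑ j ∈ T.erase v, (-1) ^ countLT T j * A v j * mpf A (T.erase j) = 0 := by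
  set S := T.erase v with hS
  have hexpand : ∀ j ∈ S, (-1) ^ countLT T j * A v j * mpf A (T.erase j)
      = ∑ k ∈ S.erase j, (-1) ^ (countLT T j + countLT (S.erase j) v + countLT (S.erase j) k)
          * (A v j * A v k * mpf A ((S.erase j).erase k)) := by
    intro j hj
    have hvj : v ∉ S.erase j := fun h => (mem_erase.1 (mem_of_mem_erase h)).1 rfl
    rw [← insert_erase (mem_erase.2 ⟨(mem_erase.1 hj).1.symm, hv⟩), erase_right_comm,
      mpf_insert hA hvj, mul_sum]
    refine sum_congr rfl fun k _ => ?_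
    rw [pow_add, pow_add]
    ring
  rw [sum_congr rfl hexpand]
  refine sum_sum_erase_eq_zero_of_antisymm S _ fun j hj k hk hjk => ?_
  have hsign := countLT_double_expansion_mod_two hv hj hk hjk
  rw [← hS] at hsign
  rw [neg_one_pow_eq_of_mod_two_eq
      (k := countLT T k + countLT (S.erase k) v + countLT (S.erase k) j + 1) (by omega),
    erase_right_comm (s := S)]
  ring

noncomputable def pfCofactor (A : Matrix (Fin n) (Fin n) R) (T : Finset (Fin n)) (j : Fin n) :
    R :=
  if j ∈ T then (-1) ^ countLT T j * mpf A (T.erase j) else 0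

lemma pfCofactor_of_notMem (A : Matrix (Fin n) (Fin n) R) {T : Finset (Fin n)} {j : Fin n}
    (hj : j ∉ T) : pfCofactor A T j = 0 :=
  if_neg hj

lemma mulVec_pfCofactor_apply (A : Matrix (Fin n) (Fin n) R) (T : Finset (Fin n)) (v : Fin n) :
    (A *ᵥ pfCofactor A T) v = ∑ j ∈ T, (-1) ^ countLT T j * A v j * mpf A (T.erase j) := by
  simp only [mulVec, dotProduct, pfCofactor, mul_ite, mul_zero]
  rw [sum_ite_mem, univ_inter]
  exact sum_congr rfl fun j _ => by ring

lemma mulVec_pfCofactor_of_notMem {A : Matrix (Fin n) (Fin n) R} (hA : ∀ i j, A i j = -A j i)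
    {T : Finset (Fin n)} {v : Fin n} (hv : v ∉ T) :
    (A *ᵥ pfCofactor A T) v = (-1) ^ countLT T v * mpf A (insert v T) := by
  rw [mulVec_pfCofactor_apply, mpf_insert hA hv, mul_sum]
  have hsq : (-1 : R) ^ countLT T v * (-1) ^ countLT T v = 1 := by
    rw [← mul_pow, neg_one_mul, neg_neg, one_pow]
  refine sum_congr rfl fun j _ => ?_
  linear_combination (-(-1 : R) ^ countLT T j * A v j * mpf A (T.erase j)) * hsq

lemma mulVec_pfCofactor_of_mem {A : Matrix (Fin n) (Fin n) R} (hA : ∀ i j, A i j = -A j i)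
    {T : Finset (Fin n)} {v : Fin n} (hv : v ∈ T) :
    (A *ᵥ pfCofactor A T) v = A v v * pfCofactor A T v := by
  rw [mulVec_pfCofactor_apply, ← add_sum_erase T _ hv, sum_erase_mul_mpf_erase_eq_zero hA hv,
    add_zero, pfCofactor, if_pos hv]
  ring

lemma pfCofactor_mul_mulVec_add_eq_zero {A : Matrix (Fin n) (Fin n) R}
    (hA : ∀ i j, A i j = -A j i) {α β : Finset (Fin n)} {v : Fin n} (hv : v ∈ α ↔ v ∈ β) :
    pfCofactor A α v * (A *ᵥ pfCofactor A β) v + pfCofactor A β v * (A *ᵥ pfCofactor A α) v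
      = 0 := by
  by_cases hvα : v ∈ α
  · have hdiag : A v v + A v v = 0 := by nth_rw 2 [hA v v]; exact add_neg_cancel _
    rw [mulVec_pfCofactor_of_mem hA (hv.1 hvα), mulVec_pfCofactor_of_mem hA hvα]
    linear_combination (pfCofactor A α v * pfCofactor A β v) * hdiag
  · simp only [pfCofactor_of_notMem A hvα, pfCofactor_of_notMem A (mt hv.2 hvα), zero_mul,
      add_zero]

lemma neg_one_pow_posSum_mul_mpf_sd_of_mem_of_notMem {A : Matrix (Fin n) (Fin n) R}
    (hA : ∀ i j, A i j = -A j i) {α β : Finset (Fin n)} {v : Fin n} (hvα : v ∈ α) (hvβ : v ∉ β) :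
    (-1 : R) ^ posSum (sd α β) {v} * (mpf A (sd α {v}) * mpf A (sd β {v}))
      = -(pfCofactor A α v * (A *ᵥ pfCofactor A β) v) := by
  have hsign : (-1 : R) ^ posSum (sd α β) {v} = -((-1) ^ countLT α v * (-1) ^ countLT β v) := by
    rw [posSum_singleton (mem_sd.2 ⟨fun _ => hvβ, fun _ => hvα⟩), pow_succ, mul_neg_one,
      ← pow_add, neg_one_pow_eq_of_mod_two_eq (countLT_sd_mod_two α β v)]
  rw [hsign, sd_singleton_of_mem hvα, sd_singleton_of_notMem hvβ, pfCofactor, if_pos hvα,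
    mulVec_pfCofactor_of_notMem hA hvβ]
  ring

lemma neg_one_pow_posSum_mul_mpf_sd {A : Matrix (Fin n) (Fin n) R} (hA : ∀ i j, A i j = -A j i)
    {α β : Finset (Fin n)} {v : Fin n} (hv : v ∈ sd α β) :
    (-1 : R) ^ posSum (sd α β) {v} * (mpf A (sd α {v}) * mpf A (sd β {v}))
      = -(pfCofactor A α v * (A *ᵥ pfCofactor A β) v
          + pfCofactor A β v * (A *ᵥ pfCofactor A α) v) := by
  by_cases hvα : v ∈ α
  · have hvβ := (mem_sd.1 hv).1 hvα
    rw [neg_one_pow_posSum_mul_mpf_sd_of_mem_of_notMem hA hvα hvβ, pfCofactor_of_notMem A hvβ,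
      zero_mul, add_zero]
  · have hvβ : v ∈ β := not_not.1 (mt (mem_sd.1 hv).2 hvα)
    rw [sd_comm α β, mul_comm (mpf A _),
      neg_one_pow_posSum_mul_mpf_sd_of_mem_of_notMem hA hvβ hvα, pfCofactor_of_notMem A hvα,
      zero_mul, zero_add]

end Cofactor

end

theorem ohta_pfaffian_identity_general {n : ℕ} {R : Type*} [CommRing R]
    (A : Matrix (Fin n) (Fin n) R) (hA : ∀ i j, A i j = - A j i)
    (α β : Finset (Fin n)) :
    ∑ v ∈ sd α β,
      (-1 : R) ^ posSum (sd α β) {v} * (mpf A (sd α {v}) * mpf A (sd β {v})) = 0 := by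
  rw [sum_congr rfl fun v hv => neg_one_pow_posSum_mul_mpf_sd hA hv, sum_neg_distrib,
    neg_eq_zero, sum_subset (subset_univ _) fun v _ hv => pfCofactor_mul_mulVec_add_eq_zero hA
      (by rw [mem_sd] at hv; tauto),
    sum_add_distrib]
  exact dotProduct_mulVec_add_dotProduct_mulVec_eq_zero (Matrix.ext fun i j => hA j i) _ _

/-- **Ohta's theorem.** For a skew-symmetric matrix `A` indexed by the ordered set
`γ = Fin n`, subsets `α, β` with `α ∪ β = γ`, and `M = α △ β` the symmetric
difference, the alternating sum `∑_{τ=1}^{t} (−1)^τ Pf(α △ {v_{i_τ}}) Pf(β △ {v_{i_τ}})`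
over the elements `v_{i_τ}` of `M` (in increasing order) vanishes. -/
theorem ohta_pfaffian_identity {n : ℕ} {R : Type*} [CommRing R]
    (A : Matrix (Fin n) (Fin n) R) (hA : ∀ i j, A i j = - A j i)
    (α β : Finset (Fin n)) (hαβ : α ∪ β = Finset.univ) :
    ∑ v ∈ sd α β,
      (-1 : R) ^ posSum (sd α β) {v} * (mpf A (sd α {v}) * mpf A (sd β {v})) = 0 :=
  ohta_pfaffian_identity_general A hA α β
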